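/- In AMBR with total budget T, candidates N = max(|H|,|R|), and per-iteration reference budget t_i = min(max(⌊T / (|H_i| · ⌈log₂ N⌉)⌋, 1), n) where |H_i| = ⌈N/2^i⌉ and n = |R|, the total number of utility evaluations performed, Σ_{i=0}^{⌈log₂ N⌉ - 1} |H_i| · (t_i − t_{i-1})⁺ counted with t_{-1}=0 and using that each iteration only evaluates new references against current candidates plus old references against surviving candidates, satisfies: each iteration i evaluates at most |H_i| · t_i pairs, hence the total is at most Σ_i |H_i| · t_i ≤ Σ_i |H_i| · max(⌊T/(|H_i|⌈log₂ N⌉)⌋, 1) ≤ T + Σ_i |H_i|. -/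

import Mathlib

/-!
Each term `h * max ⌊T / (h K)⌋ 1` is at most `⌊T / K⌋ + h`, since `h * ⌊T / (h K)⌋ ≤ ⌊T / K⌋`;
summing over the `K` iterations gives at most `K ⌊T / K⌋ + Σ h ≤ T + Σ h`.
-/

open Finset

namespace Nat

theorem mul_div_mul_left_le_div (h T K : ℕ) : h * (T / (h * K)) ≤ T / K := by
  rw [mul_comm h K, ← Nat.div_div_eq_div_mul]
  exact Nat.mul_div_le _ _

theorem mul_max_div_mul_one_le (h T K : ℕ) : h * max (T / (h * K)) 1 ≤ T / K + h :=
  calc h * max (T / (h * K)) 1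
      ≤ h * (T / (h * K) + 1) := Nat.mul_le_mul_left _ (max_le (Nat.le_succ _) le_add_self)
    _ = h * (T / (h * K)) + h := by rw [mul_add_one]
    _ ≤ T / K + h := Nat.add_le_add_right (mul_div_mul_left_le_div h T K) _

theorem sum_mul_max_div_mul_card_one_le {ι : Type*} (s : Finset ι) (h : ι → ℕ) (T : ℕ) :
    ∑ i ∈ s, h i * max (T / (h i * #s)) 1 ≤ T + ∑ i ∈ s, h i :=
  calc ∑ i ∈ s, h i * max (T / (h i * #s)) 1
      ≤ ∑ i ∈ s, (T / #s + h i) := sum_le_sum fun i _ => mul_max_div_mul_one_le (h i) T #s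
    _ = #s * (T / #s) + ∑ i ∈ s, h i := by rw [sum_add_distrib, sum_const, smul_eq_mul]
    _ ≤ T + ∑ i ∈ s, h i := Nat.add_le_add_right (Nat.mul_div_le _ _) _

end Nat

theorem stmt_4_general (T n : ℕ)
    (K : ℕ)
    (Hsize : ℕ → ℕ)
    (t : ℕ → ℕ) (ht : ∀ i, t i = min (max (T / (Hsize i * K)) 1) n) :
    (∑ i ∈ Finset.range K,
        Hsize i * (t i - (if i = 0 then 0 else t (i - 1)))) ≤
      ∑ i ∈ Finset.range K, Hsize i * t i ∧
    (∑ i ∈ Finset.range K, Hsize i * t i) ≤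
      ∑ i ∈ Finset.range K, Hsize i * max (T / (Hsize i * K)) 1 ∧
    (∑ i ∈ Finset.range K, Hsize i * max (T / (Hsize i * K)) 1) ≤
      T + ∑ i ∈ Finset.range K, Hsize i := by
  refine ⟨?_, ?_, ?_⟩
  · exact sum_le_sum fun i _ => Nat.mul_le_mul_left _ (Nat.sub_le _ _)
  · exact sum_le_sum fun i _ => Nat.mul_le_mul_left _ ((ht i).trans_le (min_le_left _ _))
  · simpa only [card_range] using Nat.sum_mul_max_div_mul_card_one_le (range K) Hsize T

/-- Budget bound for AMBR: the total number of utility evaluations is at most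
`Σ_i |H_i|·t_i ≤ Σ_i |H_i|·max(⌊T/(|H_i|⌈log₂ N⌉)⌋, 1) ≤ T + Σ_i |H_i|`. -/
theorem stmt_4 (T N n : ℕ) (hN : 1 ≤ N)
    (K : ℕ) (hK : K = Nat.clog 2 N)
    (Hsize : ℕ → ℕ) (hHsize : ∀ i, Hsize i = N ⌈/⌉ 2 ^ i)
    (t : ℕ → ℕ) (ht : ∀ i, t i = min (max (T / (Hsize i * K)) 1) n) :
    (∑ i ∈ Finset.range K,
        Hsize i * (t i - (if i = 0 then 0 else t (i - 1)))) ≤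
      ∑ i ∈ Finset.range K, Hsize i * t i ∧
    (∑ i ∈ Finset.range K, Hsize i * t i) ≤
      ∑ i ∈ Finset.range K, Hsize i * max (T / (Hsize i * K)) 1 ∧
    (∑ i ∈ Finset.range K, Hsize i * max (T / (Hsize i * K)) 1) ≤
      T + ∑ i ∈ Finset.range K, Hsize i :=
  stmt_4_general T n K Hsize t ht
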